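/- Let G be a graph on n vertices whose longest cycle C (with a fixed orientation) is not Hamiltonian, let R be a component of G − V(C), and suppose v_i, v_j are vertices of C joined by a path P with all internal vertices in R, chosen so that the number of internal vertices of the oriented segment C(v_i, v_j) is minimum, and subject to that, |V(P)| is minimum. Then no internal vertex of P has a neighbor among the internal vertices of C(v_i, v_j), no internal vertex of P is adjacent to a non-consecutive internal vertex of P, and v_i, v_j have no neighbors among the internal vertices of P other than their neighbors on P. -/
import Mathlib


open SimpleGraph

/-- A vertex is heavy if its degree is at least half the number of vertices. -/
def Heavy {V : Type*} [Fintype V] (G : SimpleGraph V) (v : V) : Prop :=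
  Fintype.card V ≤ 2 * (G.neighborSet v).ncard

/-- `{x,y} ∈ Ẽ(G)`: distinct vertices that are adjacent or have degree sum at least `n`. -/
def TEdge {V : Type*} [Fintype V] (G : SimpleGraph V) (x y : V) : Prop :=
  x ≠ y ∧ (G.Adj x y ∨
    Fintype.card V ≤ (G.neighborSet x).ncard + (G.neighborSet y).ncard)

/-- `a` is the center and `b,c,d` the end vertices of an induced claw `K_{1,3}`. -/
def IsClaw {V : Type*} (G : SimpleGraph V) (a b c d : V) : Prop :=
  G.Adj a b ∧ G.Adj a c ∧ G.Adj a d ∧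
    ¬ G.Adj b c ∧ ¬ G.Adj b d ∧ ¬ G.Adj c d ∧ b ≠ c ∧ b ≠ d ∧ c ≠ d

/-- Every claw has at least one heavy end vertex. -/
def OneHeavy {V : Type*} [Fintype V] (G : SimpleGraph V) : Prop :=
  ∀ a b c d, IsClaw G a b c d → Heavy G b ∨ Heavy G c ∨ Heavy G d

/-- Every claw has at least two heavy end vertices. -/
def TwoHeavy {V : Type*} [Fintype V] (G : SimpleGraph V) : Prop :=
  ∀ a b c d, IsClaw G a b c d →
    (Heavy G b ∧ Heavy G c) ∨ (Heavy G b ∧ Heavy G d) ∨ (Heavy G c ∧ Heavy G d)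

/-- Every claw has two end vertices with degree sum at least `n`. -/
def ClawHeavy {V : Type*} [Fintype V] (G : SimpleGraph V) : Prop :=
  ∀ a b c d, IsClaw G a b c d →
    Fintype.card V ≤ (G.neighborSet b).ncard + (G.neighborSet c).ncard ∨
    Fintype.card V ≤ (G.neighborSet b).ncard + (G.neighborSet d).ncard ∨
    Fintype.card V ≤ (G.neighborSet c).ncard + (G.neighborSet d).ncard

/-- `G` contains no induced claw. -/
def ClawFree {V : Type*} (G : SimpleGraph V) : Prop :=
  ∀ a b c d, ¬ IsClaw G a b c d

/-- Almost distance-hereditary: in every connected induced subgraph the distance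
between two vertices exceeds their distance in `G` by at most one. -/
def AlmostDH {V : Type*} (G : SimpleGraph V) : Prop :=
  ∀ s : Set V, (G.induce s).Connected →
    ∀ x y : s, (G.induce s).dist x y ≤ G.dist (x : V) (y : V) + 1

/-- Distance-hereditary: every connected induced subgraph preserves distances. -/
def DistHered {V : Type*} (G : SimpleGraph V) : Prop :=
  ∀ s : Set V, (G.induce s).Connected →
    ∀ x y : s, (G.induce s).dist x y = G.dist (x : V) (y : V)

/-- A cycle in `G`, encoded as an injective cyclic sequence of `m ≥ 3` pairwise
adjacent-in-order vertices. -/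
def IsCycleMap {V : Type*} (G : SimpleGraph V) (m : ℕ) (f : ZMod m → V) : Prop :=
  3 ≤ m ∧ Function.Injective f ∧ ∀ i, G.Adj (f i) (f (i + 1))

/-- A longest cycle of `G`. -/
def IsLongestCycleMap {V : Type*} (G : SimpleGraph V) (m : ℕ) (f : ZMod m → V) : Prop :=
  IsCycleMap G m f ∧ ∀ (m' : ℕ) (f' : ZMod m' → V), IsCycleMap G m' f' → m' ≤ m

/-- `R` is a connected component of the subgraph of `G` induced on `W`. -/
def IsCompOf {V : Type*} (G : SimpleGraph V) (W R : Set V) : Prop :=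
  R.Nonempty ∧ R ⊆ W ∧ (G.induce R).Connected ∧
    ∀ x ∈ R, ∀ y ∈ W, G.Adj x y → y ∈ R

/-- A path `P = f a, u₁, …, u_r, f b` between two vertices of the cycle `f`,
all of whose internal vertices lie in `R` (and there is at least one). -/
def PathThru {V : Type*} (G : SimpleGraph V) (R : Set V) {m : ℕ}
    (f : ZMod m → V) (a b : ZMod m) (r : ℕ) (u : Fin (r + 2) → V) : Prop :=
  1 ≤ r ∧ Function.Injective u ∧ u 0 = f a ∧ u (Fin.last (r + 1)) = f b ∧
    (∀ i : Fin (r + 1), G.Adj (u i.castSucc) (u i.succ)) ∧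
    ∀ i : Fin (r + 2), i ≠ 0 → i ≠ Fin.last (r + 1) → (u i : V) ∈ R

/-- Shortcut a `PathThru` along a chord `u s — u t`. -/
lemma shortcut {V : Type*} (G : SimpleGraph V) (R : Set V) {m : ℕ}
    (f : ZMod m → V) (a b : ZMod m) (r : ℕ) (u : Fin (r + 2) → V)
    (hP : PathThru G R f a b r u) (s t : Fin (r + 2))
    (h2 : (s : ℕ) + 2 ≤ (t : ℕ)) (hts : (t : ℕ) ≤ r + (s : ℕ))
    (hadj : G.Adj (u s) (u t)) :
    ∃ r' : ℕ, r' < r ∧ ∃ u' : Fin (r' + 2) → V, PathThru G R f a b r' u' := by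
  obtain ⟨hr1, hinj, h0, hlast, hadjP, hmem⟩ := hP
  have hti := t.isLt
  have hsi := s.isLt
  set e := (t : ℕ) - (s : ℕ) - 1 with he
  have her : e + 1 ≤ r := by omega
  refine ⟨r - e, by omega, fun i =>
      if h : (i : ℕ) ≤ (s : ℕ) then u ⟨(i : ℕ), by omega⟩
      else u ⟨(i : ℕ) + e, by have := i.isLt; omega⟩, by omega, ?_, ?_, ?_, ?_, ?_⟩
  · intro i j hij
    have hi := i.isLt
    have hj := j.isLt
    dsimp only at hij
    by_cases hci : (i : ℕ) ≤ (s : ℕ) <;> by_cases hcj : (j : ℕ) ≤ (s : ℕ)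
    · rw [dif_pos hci, dif_pos hcj] at hij
      have := hinj hij; rw [Fin.mk.injEq] at this; exact Fin.ext (by omega)
    · rw [dif_pos hci, dif_neg hcj] at hij
      have := hinj hij; rw [Fin.mk.injEq] at this; exact Fin.ext (by omega)
    · rw [dif_neg hci, dif_pos hcj] at hij
      have := hinj hij; rw [Fin.mk.injEq] at this; exact Fin.ext (by omega)
    · rw [dif_neg hci, dif_neg hcj] at hij
      have := hinj hij; rw [Fin.mk.injEq] at this; exact Fin.ext (by omega)
  · show dite _ _ _ = f a
    rw [dif_pos (by simp)]
    rw [← h0]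
    exact congrArg u (Fin.ext (by simp))
  · show dite _ _ _ = f b
    rw [dif_neg (by simp only [Fin.val_last]; omega)]
    rw [← hlast]
    exact congrArg u (Fin.ext (by simp only [Fin.val_last]; omega))
  · intro i
    have hi := i.isLt
    show G.Adj (dite _ _ _) (dite _ _ _)
    simp only [Fin.coe_castSucc, Fin.val_succ]
    by_cases hA : (i : ℕ) + 1 ≤ (s : ℕ)
    · rw [dif_pos (by omega), dif_pos hA]
      exact hadjP ⟨(i : ℕ), by omega⟩
    · by_cases hB : (i : ℕ) ≤ (s : ℕ)
      · rw [dif_pos hB, dif_neg hA]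
        have g1 : (⟨(i : ℕ), by omega⟩ : Fin (r + 2)) = s :=
          Fin.ext (show (i : ℕ) = (s : ℕ) by omega)
        have g2 : (⟨(i : ℕ) + 1 + e, by omega⟩ : Fin (r + 2)) = t :=
          Fin.ext (show (i : ℕ) + 1 + e = (t : ℕ) by omega)
        rw [g1, g2]
        exact hadj
      · rw [dif_neg hB, dif_neg (by omega)]
        have g2 : (⟨(i : ℕ) + 1 + e, by omega⟩ : Fin (r + 2)) =
            (⟨(i : ℕ) + e + 1, by omega⟩ : Fin (r + 2)) :=
          Fin.ext (show (i : ℕ) + 1 + e = (i : ℕ) + e + 1 by omega)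
        rw [g2]
        exact hadjP ⟨(i : ℕ) + e, by omega⟩
  · intro i hi0 hil
    have hi := i.isLt
    simp only [ne_eq, Fin.ext_iff, Fin.val_zero, Fin.val_last] at hi0 hil
    show dite _ _ _ ∈ R
    by_cases hci : (i : ℕ) ≤ (s : ℕ)
    · rw [dif_pos hci]
      exact hmem ⟨(i : ℕ), by omega⟩
        (by simp only [ne_eq, Fin.ext_iff, Fin.val_zero]; omega)
        (by simp only [ne_eq, Fin.ext_iff, Fin.val_last]; omega)
    · rw [dif_neg hci]
      exact hmem ⟨(i : ℕ) + e, by omega⟩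
        (by simp only [ne_eq, Fin.ext_iff, Fin.val_zero]; omega)
        (by simp only [ne_eq, Fin.ext_iff, Fin.val_last]; omega)

/-- Cut a `PathThru` at an internal vertex adjacent to a cycle vertex `f c`. -/
lemma cutPath {V : Type*} (G : SimpleGraph V) (R : Set V) {m : ℕ}
    (f : ZMod m → V) (hf : Function.Injective f) (a b c : ZMod m) (hac : a ≠ c)
    (hRf : R ⊆ (Set.range f)ᶜ)
    (r : ℕ) (u : Fin (r + 2) → V) (hP : PathThru G R f a b r u)
    (s : Fin (r + 2)) (hs1 : 1 ≤ (s : ℕ)) (hsr : (s : ℕ) ≤ r)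
    (hadj : G.Adj (u s) (f c)) :
    ∃ u' : Fin ((s : ℕ) + 2) → V, PathThru G R f a c (s : ℕ) u' := by
  obtain ⟨hr1, hinj, h0, hlast, hadjP, hmem⟩ := hP
  have hsi := s.isLt
  have key : ∀ x : Fin (r + 2), (x : ℕ) ≤ r → u x = f c → False := by
    intro x hx hux
    rcases Nat.eq_zero_or_pos (x : ℕ) with h | h
    · have hx0 : x = 0 := Fin.ext (by simpa using h)
      rw [hx0, h0] at hux
      exact hac (hf hux)
    · have hmx : u x ∈ R := hmem x
        (by simp only [ne_eq, Fin.ext_iff, Fin.val_zero]; omega)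
        (by simp only [ne_eq, Fin.ext_iff, Fin.val_last]; omega)
      exact (hRf hmx) ⟨c, hux.symm⟩
  refine ⟨fun i => if h : (i : ℕ) ≤ (s : ℕ) then u ⟨(i : ℕ), by omega⟩ else f c,
    hs1, ?_, ?_, ?_, ?_, ?_⟩
  · intro i j hij
    have hi := i.isLt; have hj := j.isLt
    dsimp only at hij
    by_cases hci : (i : ℕ) ≤ (s : ℕ) <;> by_cases hcj : (j : ℕ) ≤ (s : ℕ)
    · rw [dif_pos hci, dif_pos hcj] at hij
      have := hinj hij; rw [Fin.mk.injEq] at this; exact Fin.ext (by omega)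
    · rw [dif_pos hci, dif_neg hcj] at hij
      exact (key ⟨(i : ℕ), by omega⟩ (show (i : ℕ) ≤ r by omega) hij).elim
    · rw [dif_neg hci, dif_pos hcj] at hij
      exact (key ⟨(j : ℕ), by omega⟩ (show (j : ℕ) ≤ r by omega) hij.symm).elim
    · exact Fin.ext (by omega)
  · show dite _ _ _ = f a
    rw [dif_pos (by simp)]
    rw [← h0]
    exact congrArg u (Fin.ext (by simp))
  · show dite _ _ _ = f c
    rw [dif_neg (by simp only [Fin.val_last]; omega)]
  · intro i
    have hi := i.isLt
    show G.Adj (dite _ _ _) (dite _ _ _)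
    simp only [Fin.coe_castSucc, Fin.val_succ]
    by_cases hA : (i : ℕ) + 1 ≤ (s : ℕ)
    · rw [dif_pos (by omega), dif_pos hA]
      exact hadjP ⟨(i : ℕ), by omega⟩
    · rw [dif_pos (by omega), dif_neg hA]
      have g1 : (⟨(i : ℕ), by omega⟩ : Fin (r + 2)) = s :=
        Fin.ext (show (i : ℕ) = (s : ℕ) by omega)
      rw [g1]
      exact hadj
  · intro i hi0 hil
    have hi := i.isLt
    simp only [ne_eq, Fin.ext_iff, Fin.val_zero, Fin.val_last] at hi0 hil
    show dite _ _ _ ∈ R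
    rw [dif_pos (by omega)]
    exact hmem ⟨(i : ℕ), by omega⟩
      (by simp only [ne_eq, Fin.ext_iff, Fin.val_zero]; omega)
      (by simp only [ne_eq, Fin.ext_iff, Fin.val_last]; omega)

/-- Claim 1 of Theorem 3: choose `P = v_i u₁ … u_r v_j` (internal vertices in the
component `R`) minimizing first the number of internal vertices of the oriented
segment `C(v_i, v_j)` and then `|V(P)|`. Then non-consecutive internal vertices
of `P` are non-adjacent, internal vertices of `P` have no neighbors among the
internal vertices of `C(v_i, v_j)`, and `v_i` (resp. `v_j`) is adjacent to no
`u_s` with `s ≥ 2` (resp. `s ≤ r − 1`). -/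
theorem claim1 {V : Type*} [Fintype V] [DecidableEq V] (G : SimpleGraph V)
    (hnh : ¬ G.IsHamiltonian)
    (m : ℕ) (f : ZMod m → V) (hC : IsLongestCycleMap G m f)
    (R : Set V) (hR : IsCompOf G (Set.range f)ᶜ R)
    (a b : ZMod m) (r : ℕ) (u : Fin (r + 2) → V)
    (hP : PathThru G R f a b r u)
    (hmin1 : ∀ (a' b' : ZMod m) (r' : ℕ) (u' : Fin (r' + 2) → V),
      PathThru G R f a' b' r' u' → (b - a).val ≤ (b' - a').val)
    (hmin2 : ∀ (a' b' : ZMod m) (r' : ℕ) (u' : Fin (r' + 2) → V),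
      PathThru G R f a' b' r' u' → (b' - a').val = (b - a).val → r ≤ r') :
    (∀ s t : Fin (r + 2), 1 ≤ (s : ℕ) → (t : ℕ) ≤ r → (s : ℕ) + 2 ≤ (t : ℕ) →
        ¬ G.Adj (u s) (u t)) ∧
    (∀ s : Fin (r + 2), 1 ≤ (s : ℕ) → (s : ℕ) ≤ r →
      ∀ c : ZMod m, 1 ≤ (c - a).val → (c - a).val < (b - a).val →
        ¬ G.Adj (u s) (f c)) ∧
    (∀ s : Fin (r + 2), 2 ≤ (s : ℕ) → (s : ℕ) ≤ r → ¬ G.Adj (f a) (u s)) ∧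
    (∀ s : Fin (r + 2), 1 ≤ (s : ℕ) → (s : ℕ) ≤ r - 1 → ¬ G.Adj (f b) (u s)) := by
  have hm3 : 3 ≤ m := hC.1.1
  have hf : Function.Injective f := hC.1.2.1
  have hr1 : 1 ≤ r := hP.1
  refine ⟨?_, ?_, ?_, ?_⟩
  · intro s t hs ht hst hadj
    obtain ⟨r', hr', u', hP'⟩ :=
      shortcut G R f a b r u hP s t hst (by omega) hadj
    exact absurd (hmin2 a b r' u' hP' rfl) (by omega)
  · intro s hs1 hsr c hc1 hc2 hadj
    haveI : NeZero m := ⟨by omega⟩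
    have hac : a ≠ c := by
      intro h
      rw [h, sub_self] at hc1
      simp [ZMod.val_zero] at hc1
    obtain ⟨u', hP'⟩ := cutPath G R f hf a b c hac hR.2.1 r u hP s hs1 hsr hadj
    have := hmin1 a c (s : ℕ) u' hP'
    omega
  · intro s hs2 hsr hadj
    obtain ⟨r', hr', u', hP'⟩ :=
      shortcut G R f a b r u hP 0 s (by simpa using hs2) (by simpa using hsr)
        (by rw [hP.2.2.1]; exact hadj)
    exact absurd (hmin2 a b r' u' hP' rfl) (by omega)
  · intro s hs1 hsr hadj
    obtain ⟨r', hr', u', hP'⟩ :=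
      shortcut G R f a b r u hP s (Fin.last (r + 1))
        (by simp only [Fin.val_last]; omega) (by simp only [Fin.val_last]; omega)
        (by rw [hP.2.2.2.1]; exact hadj.symm)
    exact absurd (hmin2 a b r' u' hP' rfl) (by omega)
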